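/- For the set-valued map G : ℝ³ ⇉ ℝ², one has 0 ∈ G(x) if and only if x = 0. -/

import Mathlib

/-- `σ x = √(x₁² + x₂²)`. -/
noncomputable def sigmaBI (x : EuclideanSpace ℝ (Fin 3)) : ℝ :=
  Real.sqrt (x 0 ^ 2 + x 1 ^ 2)

/-- First component of the speed-gradient vector `g(x)` for the Brockett integrator:
`g₁(x) = 2x₁ − 4x₂x₃ − 2|x₃|x₁/σ(x) + 2 sgn(x₃) x₂ σ(x)`. -/
noncomputable def g1BI (x : EuclideanSpace ℝ (Fin 3)) : ℝ :=
  2 * x 0 - 4 * x 1 * x 2 - 2 * |x 2| * x 0 / sigmaBI x + 2 * Real.sign (x 2) * x 1 * sigmaBI x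

/-- Second component of the speed-gradient vector `g(x)` for the Brockett integrator:
`g₂(x) = 2x₂ + 4x₁x₃ − 2|x₃|x₂/σ(x) − 2 sgn(x₃) x₁ σ(x)`. -/
noncomputable def g2BI (x : EuclideanSpace ℝ (Fin 3)) : ℝ :=
  2 * x 1 + 4 * x 0 * x 2 - 2 * |x 2| * x 1 / sigmaBI x - 2 * Real.sign (x 2) * x 0 * sigmaBI x

/-- The set-valued map `G : ℝ³ ⇉ ℝ²`: `G(x) = {g(x)}` if `σ(x) ≠ 0` and `x₃ ≠ 0`;
`G(x) = {(2x₁, 2x₂), (2x₁ + 2x₂σ(x), 2x₂ − 2x₁σ(x)), (2x₁ − 2x₂σ(x), 2x₂ + 2x₁σ(x))}` if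
`x₃ = 0`; and `G(x) = {−2|x₃|w : |w| = 1}` if `σ(x) = 0` and `x₃ ≠ 0`. -/
noncomputable def GBI (x : EuclideanSpace ℝ (Fin 3)) : Set (ℝ × ℝ) :=
  if x 2 = 0 then
    {(2 * x 0, 2 * x 1),
     (2 * x 0 + 2 * x 1 * sigmaBI x, 2 * x 1 - 2 * x 0 * sigmaBI x),
     (2 * x 0 - 2 * x 1 * sigmaBI x, 2 * x 1 + 2 * x 0 * sigmaBI x)}
  else if sigmaBI x = 0 then
    {p : ℝ × ℝ | ∃ w₁ w₂ : ℝ, w₁ ^ 2 + w₂ ^ 2 = 1 ∧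
      p = (-2 * |x 2| * w₁, -2 * |x 2| * w₂)}
  else {(g1BI x, g2BI x)}

/-! Pairing `g(x)` with the radial vector `(x₁, x₂)` gives `2σ(σ − |x₃|)`, and pairing it with the
tangential vector `(x₂, −x₁)` gives `2σ²(sgn(x₃) σ − 2x₃)`. So `g(x) = 0` would force both
`σ = |x₃|` and `σ = 2|x₃|`, which is impossible for `x₃ ≠ 0`. On the plane `x₃ = 0` the elements of
`G(x)` are the images of `2(x₁, x₂)` under `[[1, t], [−t, 1]]` with `t ∈ {0, σ, −σ}`, matrices of
determinant `1 + t² > 0`. -/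

lemma EuclideanSpace.eq_zero_iff_fin_three {𝕜 : Type*} [RCLike 𝕜] (x : EuclideanSpace 𝕜 (Fin 3)) :
    x = 0 ↔ x 0 = 0 ∧ x 1 = 0 ∧ x 2 = 0 := by
  refine ⟨by rintro rfl; simp, fun ⟨h₀, h₁, h₂⟩ => ?_⟩
  ext i
  fin_cases i <;> assumption

lemma eq_zero_of_add_mul_eq_zero_of_sub_mul_eq_zero {a b t : ℝ} (h₁ : a + b * t = 0)
    (h₂ : b - a * t = 0) : a = 0 ∧ b = 0 :=
  mul_self_add_mul_self_eq_zero.mp (by linear_combination a * h₁ + b * h₂)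

lemma zero_notMem_smul_unitCircle {r : ℝ} (hr : r ≠ 0) :
    ((0 : ℝ), (0 : ℝ)) ∉ {p : ℝ × ℝ | ∃ w₁ w₂ : ℝ, w₁ ^ 2 + w₂ ^ 2 = 1 ∧ p = (r * w₁, r * w₂)} := by
  rintro ⟨w₁, w₂, hw, h⟩
  obtain ⟨h₁, h₂⟩ := Prod.mk.inj h
  rw [eq_comm, mul_eq_zero, or_iff_right hr] at h₁ h₂
  simp [h₁, h₂] at hw

lemma sigmaBI_sq (x : EuclideanSpace ℝ (Fin 3)) : sigmaBI x ^ 2 = x 0 ^ 2 + x 1 ^ 2 :=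
  Real.sq_sqrt (by positivity)

lemma mul_g1BI_add_mul_g2BI (x : EuclideanSpace ℝ (Fin 3)) (hs : sigmaBI x ≠ 0) :
    x 0 * g1BI x + x 1 * g2BI x = 2 * sigmaBI x * (sigmaBI x - |x 2|) := by
  unfold g1BI g2BI
  field_simp
  linear_combination (2 * |x 2| - 2 * sigmaBI x) * sigmaBI_sq x

lemma mul_g1BI_sub_mul_g2BI (x : EuclideanSpace ℝ (Fin 3)) :
    x 1 * g1BI x - x 0 * g2BI x = 2 * sigmaBI x ^ 2 * (Real.sign (x 2) * sigmaBI x - 2 * x 2) := by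
  unfold g1BI g2BI
  linear_combination (4 * x 2 - 2 * Real.sign (x 2) * sigmaBI x) * sigmaBI_sq x

lemma g1BI_g2BI_ne_zero (x : EuclideanSpace ℝ (Fin 3)) (hc : x 2 ≠ 0) (hs : sigmaBI x ≠ 0) :
    (g1BI x, g2BI x) ≠ ((0 : ℝ), (0 : ℝ)) := by
  intro h
  obtain ⟨h₁, h₂⟩ := Prod.mk.inj h
  have hs_abs : sigmaBI x = |x 2| := by
    have : 2 * sigmaBI x * (sigmaBI x - |x 2|) = 0 := by
      rw [← mul_g1BI_add_mul_g2BI x hs, h₁, h₂]; ring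
    exact sub_eq_zero.mp ((mul_eq_zero.mp this).resolve_left (mul_ne_zero two_ne_zero hs))
  have hs_two : Real.sign (x 2) * sigmaBI x = 2 * x 2 := by
    have : 2 * sigmaBI x ^ 2 * (Real.sign (x 2) * sigmaBI x - 2 * x 2) = 0 := by
      rw [← mul_g1BI_sub_mul_g2BI x, h₁, h₂]; ring
    exact sub_eq_zero.mp ((mul_eq_zero.mp this).resolve_left (by positivity))
  have hsign_sq : Real.sign (x 2) ^ 2 = 1 := by
    rcases Real.sign_apply_eq_of_ne_zero _ hc with h | h <;> simp [h]
  have : x 2 ^ 2 = 4 * x 2 ^ 2 := by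
    calc x 2 ^ 2 = Real.sign (x 2) ^ 2 * sigmaBI x ^ 2 := by rw [hsign_sq, hs_abs, one_mul, sq_abs]
      _ = 4 * x 2 ^ 2 := by rw [← mul_pow, hs_two]; ring
  exact hc (pow_eq_zero_iff two_ne_zero |>.mp (by linarith))

/-- `0 ∈ G(x)` if and only if `x = 0`. -/
theorem GBI_zero_mem_iff (x : EuclideanSpace ℝ (Fin 3)) :
    ((0 : ℝ), (0 : ℝ)) ∈ GBI x ↔ x = 0 := by
  rw [EuclideanSpace.eq_zero_iff_fin_three]
  unfold GBI
  split_ifs with hc hs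
  · simp only [hc, and_true, Set.mem_insert_iff, Set.mem_singleton_iff, Prod.mk.injEq]
    constructor
    · rintro (⟨h₁, h₂⟩ | ⟨h₁, h₂⟩ | ⟨h₁, h₂⟩)
      · exact eq_zero_of_add_mul_eq_zero_of_sub_mul_eq_zero (t := 0)
          (by linear_combination -h₁ / 2) (by linear_combination -h₂ / 2)
      · exact eq_zero_of_add_mul_eq_zero_of_sub_mul_eq_zero (t := sigmaBI x)
          (by linear_combination -h₁ / 2) (by linear_combination -h₂ / 2)
      · exact eq_zero_of_add_mul_eq_zero_of_sub_mul_eq_zero (t := -sigmaBI x)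
          (by linear_combination -h₁ / 2) (by linear_combination -h₂ / 2)
    · rintro ⟨ha, hb⟩
      simp [ha, hb]
  · exact iff_of_false (zero_notMem_smul_unitCircle (by simpa using hc)) (by simp [hc])
  · exact iff_of_false (g1BI_g2BI_ne_zero x hc hs).symm (by simp [hc])
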